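/- arXiv:2309.04045 — 3 statements merged into one kernel-verified Lean document; each statement's English description precedes it below -/
import Mathlib

section
/- For the Kaczmarz update z = x + ((t_j - ⟨p_j, x⟩)⁺ / ‖p_j‖²) · p_j, if x̂ satisfies ⟨p_j, x̂⟩ ≥ t_j, then ‖z - x̂‖² ≤ ‖x - x̂‖² - ((t_j - ⟨p_j, x⟩)⁺)² / ‖p_j‖². -/
open scoped RealInnerProductSpace

/-!
Moving from `x` along `p` by a step `s ≥ 0` changes the squared distance to a point `y` of the
half-space `⟪p, ·⟫ ≥ t` by `2 s ⟪x - y, p⟫ + s² ‖p‖²`, and `⟪x - y, p⟫ ≤ -(t - ⟪p, x⟫)`.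
For `s = m / ‖p‖²` with `m = (t - ⟪p, x⟫)⁺` we have `m (t - ⟪p, x⟫) = m²`, so the change is at
most `-2 m² / ‖p‖² + m² / ‖p‖² = -m² / ‖p‖²`.
-/

theorem max_zero_mul_self {α : Type*} [Ring α] [LinearOrder α] [IsStrictOrderedRing α] (a : α) :
    max a 0 * a = max a 0 ^ 2 := by
  rcases le_total a 0 with ha | ha
  · simp [max_eq_right ha]
  · rw [max_eq_left ha, sq]

theorem div_sq_mul_self {K : Type*} [Field K] (a b : K) : (a / b) ^ 2 * b = a ^ 2 / b := by
  rcases eq_or_ne b 0 with rfl | hb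
  · simp
  · field_simp

theorem norm_add_smul_sub_sq_le {E : Type*} [NormedAddCommGroup E] [InnerProductSpace ℝ E]
    {p x y : E} {t s : ℝ} (hy : t ≤ ⟪p, y⟫) (hs : 0 ≤ s) :
    ‖x + s • p - y‖ ^ 2 ≤ ‖x - y‖ ^ 2 - 2 * s * (t - ⟪p, x⟫) + s ^ 2 * ‖p‖ ^ 2 := by
  have hxy : ⟪x - y, p⟫ ≤ ⟪p, x⟫ - t := by
    rw [real_inner_comm, inner_sub_right]
    linarith
  calc ‖x + s • p - y‖ ^ 2 = ‖x - y‖ ^ 2 + 2 * s * ⟪x - y, p⟫ + s ^ 2 * ‖p‖ ^ 2 := by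
        rw [add_sub_right_comm, norm_add_sq_real, inner_smul_right, norm_smul, mul_pow,
          Real.norm_eq_abs, sq_abs]
        ring
    _ ≤ ‖x - y‖ ^ 2 - 2 * s * (t - ⟪p, x⟫) + s ^ 2 * ‖p‖ ^ 2 := by
        nlinarith [mul_le_mul_of_nonneg_left hxy hs]

theorem kaczmarz_update_sq_decrease_general (n : ℕ) (p : EuclideanSpace ℝ (Fin n))
    (t : ℝ) (x xhat : EuclideanSpace ℝ (Fin n))
    (hfeas : ⟪p, xhat⟫ ≥ t)
    (z : EuclideanSpace ℝ (Fin n))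
    (hz : z = x + ((max (t - ⟪p, x⟫) 0) / ‖p‖ ^ 2) • p) :
    ‖z - xhat‖ ^ 2 ≤ ‖x - xhat‖ ^ 2 - (max (t - ⟪p, x⟫) 0) ^ 2 / ‖p‖ ^ 2 := by
  subst hz
  set m := max (t - ⟪p, x⟫) 0
  have hstep : 0 ≤ m / ‖p‖ ^ 2 := div_nonneg (le_max_right _ _) (sq_nonneg _)
  calc _ ≤ ‖x - xhat‖ ^ 2 - 2 * (m / ‖p‖ ^ 2) * (t - ⟪p, x⟫) + (m / ‖p‖ ^ 2) ^ 2 * ‖p‖ ^ 2 :=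
        norm_add_smul_sub_sq_le hfeas hstep
    _ = ‖x - xhat‖ ^ 2 - m ^ 2 / ‖p‖ ^ 2 := by
        rw [mul_assoc, div_mul_eq_mul_div, max_zero_mul_self, div_sq_mul_self]
        ring

/-- Kaczmarz update for an inequality constraint: squared-distance decrease toward
any feasible point `x̂` with `⟪p, x̂⟫ ≥ t`. -/
theorem kaczmarz_update_sq_decrease (n : ℕ) (p : EuclideanSpace ℝ (Fin n))
    (hp : p ≠ 0) (t : ℝ) (x xhat : EuclideanSpace ℝ (Fin n))
    (hfeas : ⟪p, xhat⟫ ≥ t)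
    (z : EuclideanSpace ℝ (Fin n))
    (hz : z = x + ((max (t - ⟪p, x⟫) 0) / ‖p‖ ^ 2) • p) :
    ‖z - xhat‖ ^ 2 ≤ ‖x - xhat‖ ^ 2 - (max (t - ⟪p, x⟫) 0) ^ 2 / ‖p‖ ^ 2 :=
  kaczmarz_update_sq_decrease_general n p t x xhat hfeas z hz
end

section
/- The Kaczmarz update for an inequality constraint is a contraction toward any feasible point: if ⟨p, x̂⟩ ≥ t and z = x + ((t - ⟨p, x⟩)⁺ / ‖p‖²) p, then ‖z - x̂‖ ≤ ‖x - x̂‖. -/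
/-!
The step moves `x` along `p` by `c = (t - ⟪p, x⟫)⁺ / ‖p‖²`. Expanding the square,
`‖x + c • p - x̂‖² = ‖x - x̂‖² + c (c ‖p‖² + 2 ⟪x - x̂, p⟫)`, and when the step is nontrivial
`c ‖p‖² = t - ⟪p, x⟫`, so the bracket is `⟪p, x⟫ - t - 2 (⟪p, x̂⟫ - t) ≤ 0` by feasibility of `x̂`.
-/

open scoped RealInnerProductSpace

variable {E : Type*} [NormedAddCommGroup E] [InnerProductSpace ℝ E]

theorem norm_add_smul_le_norm_iff (d p : E) (c : ℝ) :
    ‖d + c • p‖ ≤ ‖d‖ ↔ c * (c * ‖p‖ ^ 2 + 2 * ⟪d, p⟫) ≤ 0 := by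
  rw [← sq_le_sq₀ (norm_nonneg _) (norm_nonneg _), norm_add_sq_real, inner_smul_right,
    norm_smul, mul_pow, Real.norm_eq_abs, sq_abs]
  constructor <;> intro h <;> linarith

/-- The Kaczmarz step for the constraint `⟪p, y⟫ ≥ t`; it does nothing when `p = 0`,
since then the step length is `_ / 0 = 0`. -/
noncomputable def kaczmarzStep (p : E) (t : ℝ) (x : E) : E :=
  x + (max (t - ⟪p, x⟫) 0 / ‖p‖ ^ 2) • p

theorem norm_kaczmarzStep_sub_le (p : E) {t : ℝ} (x : E) {xhat : E} (hfeas : t ≤ ⟪p, xhat⟫) :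
    ‖kaczmarzStep p t x - xhat‖ ≤ ‖x - xhat‖ := by
  rcases eq_or_ne p 0 with rfl | hp
  · simp [kaczmarzStep]
  rw [kaczmarzStep, add_sub_right_comm, norm_add_smul_le_norm_iff,
    div_mul_cancel₀ _ (by positivity), inner_sub_left, real_inner_comm p x, real_inner_comm p xhat]
  rcases le_total (t - ⟪p, x⟫) 0 with h | h
  · simp [max_eq_right h]
  · rw [max_eq_left h]
    exact mul_nonpos_of_nonneg_of_nonpos (by positivity) (by linarith)

theorem kaczmarz_update_contraction_general (n : ℕ) (p : EuclideanSpace ℝ (Fin n))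
    (t : ℝ) (x xhat : EuclideanSpace ℝ (Fin n))
    (hfeas : ⟪p, xhat⟫ ≥ t)
    (z : EuclideanSpace ℝ (Fin n))
    (hz : z = x + ((max (t - ⟪p, x⟫) 0) / ‖p‖ ^ 2) • p) :
    ‖z - xhat‖ ≤ ‖x - xhat‖ :=
  hz ▸ norm_kaczmarzStep_sub_le p x hfeas

/-- The Kaczmarz update for an inequality constraint is a contraction toward
any feasible point. -/
theorem kaczmarz_update_contraction (n : ℕ) (p : EuclideanSpace ℝ (Fin n))
    (hp : p ≠ 0) (t : ℝ) (x xhat : EuclideanSpace ℝ (Fin n))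
    (hfeas : ⟪p, xhat⟫ ≥ t)
    (z : EuclideanSpace ℝ (Fin n))
    (hz : z = x + ((max (t - ⟪p, x⟫) 0) / ‖p‖ ^ 2) • p) :
    ‖z - xhat‖ ≤ ‖x - xhat‖ :=
  kaczmarz_update_contraction_general n p t x xhat hfeas z hz
end

section
/- For matrices X, X' with ‖X‖_F ≤ 1, ‖X'‖_F ≤ 1, and their augmentations X̃ = [[X,0],[0,1]], X̃' = [[X',0],[0,1]] (which satisfy ‖X̃‖_F, ‖X̃'‖_F ≥ 1), one has ‖X - X'‖_F ≤ 2 ‖X̃/‖X̃‖_F - X̃'/‖X̃'‖_F‖_F. -/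
/-!
Put `a = ‖X̃‖_F = √(‖X‖_F² + 1) ∈ [1, √2]` and `b = ‖X̃'‖_F`. The normalized difference
`X̃/a - X̃'/b` is block diagonal with blocks `X/a - X'/b` and `1/a - 1/b`, so its norm is
`√(s² + t²)` with `s = ‖X/a - X'/b‖_F`, `t = |1/a - 1/b|`. Since
`X - X' = a (X/a - X'/b) + a (1/b - 1/a) X'` and `‖X'‖_F ≤ 1`, we get
`‖X - X'‖_F ≤ a (s + t) ≤ √2 · √2 · √(s² + t²)`.
-/

/-- The Frobenius norm of a real matrix. -/
noncomputable def frob {m n : Type*} [Fintype m] [Fintype n]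
    (X : Matrix m n ℝ) : ℝ := Real.sqrt (∑ i, ∑ j, (X i j) ^ 2)

theorem norm_sub_le_two_mul_sqrt {E : Type*} [SeminormedAddCommGroup E] [NormedSpace ℝ E]
    {x y : E} {a b : ℝ} (ha : 1 ≤ a) (ha2 : a ^ 2 ≤ 2) (hy : ‖y‖ ≤ 1) :
    ‖x - y‖ ≤ 2 * √(‖a⁻¹ • x - b⁻¹ • y‖ ^ 2 + (a⁻¹ - b⁻¹) ^ 2) := by
  set s := ‖a⁻¹ • x - b⁻¹ • y‖
  set t := |a⁻¹ - b⁻¹|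
  have ha0 : 0 < a := by linarith
  have hdecomp : x - y = a • (a⁻¹ • x - b⁻¹ • y) + (a * (b⁻¹ - a⁻¹)) • y := by
    match_scalars <;> field_simp; ring
  have hst : s + t ≤ √2 * √(s ^ 2 + t ^ 2) := by
    rw [← Real.sqrt_mul zero_le_two]
    exact Real.le_sqrt_of_sq_le (by nlinarith [sq_nonneg (s - t)])
  have ha_le : a ≤ √2 := Real.le_sqrt_of_sq_le ha2
  calc ‖x - y‖ ≤ a * s + a * t * ‖y‖ := by
        rw [hdecomp]
        refine (norm_add_le _ _).trans_eq ?_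
        rw [norm_smul, norm_smul, Real.norm_eq_abs, Real.norm_eq_abs, abs_mul, abs_of_pos ha0,
          abs_sub_comm]
    _ ≤ a * (s + t) := by
        have : a * t * ‖y‖ ≤ a * t := mul_le_of_le_one_right (by positivity) hy
        linarith
    _ ≤ √2 * (√2 * √(s ^ 2 + t ^ 2)) := by gcongr
    _ = 2 * √(s ^ 2 + (a⁻¹ - b⁻¹) ^ 2) := by
        rw [← mul_assoc, Real.mul_self_sqrt zero_le_two, sq_abs]

section Frobenius

variable {m n : Type*} [Fintype m] [Fintype n]

attribute [local instance] Matrix.frobeniusNormedAddCommGroup Matrix.frobeniusNormedSpace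

theorem frob_nonneg (X : Matrix m n ℝ) : 0 ≤ frob X :=
  Real.sqrt_nonneg _

theorem frob_sq (X : Matrix m n ℝ) : frob X ^ 2 = ∑ i, ∑ j, X i j ^ 2 :=
  Real.sq_sqrt (by positivity)

theorem frob_zero : frob (0 : Matrix m n ℝ) = 0 := by
  simp [frob]

theorem frob_eq_norm (X : Matrix m n ℝ) : frob X = ‖X‖ := by
  simp only [frob, Matrix.frobenius_norm_def, Real.norm_eq_abs, Real.rpow_two, sq_abs,
    Real.sqrt_eq_rpow, one_div]

theorem frob_smul (c : ℝ) (X : Matrix m n ℝ) : frob (c • X) = |c| * frob X := by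
  simp only [frob_eq_norm, norm_smul, Real.norm_eq_abs]

theorem frob_sub_le_two_mul_sqrt {X Y : Matrix m n ℝ} {a b : ℝ} (ha : 1 ≤ a) (ha2 : a ^ 2 ≤ 2)
    (hY : frob Y ≤ 1) :
    frob (X - Y) ≤ 2 * √(frob (a⁻¹ • X - b⁻¹ • Y) ^ 2 + (a⁻¹ - b⁻¹) ^ 2) := by
  rw [frob_eq_norm] at hY
  simpa only [frob_eq_norm] using norm_sub_le_two_mul_sqrt ha ha2 hY

theorem frob_fromBlocks_sq {l o : Type*} [Fintype l] [Fintype o]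
    (A : Matrix n l ℝ) (B : Matrix n m ℝ) (C : Matrix o l ℝ) (D : Matrix o m ℝ) :
    frob (Matrix.fromBlocks A B C D) ^ 2 =
      frob A ^ 2 + frob B ^ 2 + frob C ^ 2 + frob D ^ 2 := by
  simp only [frob_sq, Fintype.sum_sum_type, Matrix.fromBlocks_apply₁₁, Matrix.fromBlocks_apply₁₂,
    Matrix.fromBlocks_apply₂₁, Matrix.fromBlocks_apply₂₂, Finset.sum_add_distrib]
  ring

theorem frob_one_fin_one : frob (1 : Matrix (Fin 1) (Fin 1) ℝ) = 1 := by
  simp [frob]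

theorem frob_fromBlocks_zero_zero_smul_one (A : Matrix m n ℝ) (c : ℝ) :
    frob (Matrix.fromBlocks A 0 0 (c • 1 : Matrix (Fin 1) (Fin 1) ℝ)) = √(frob A ^ 2 + c ^ 2) := by
  rw [← Real.sqrt_sq (frob_nonneg _), frob_fromBlocks_sq, frob_zero, frob_zero, frob_smul,
    frob_one_fin_one, mul_one, sq_abs]
  ring_nf

end Frobenius

/-- For `‖X‖_F ≤ 1`, `‖X'‖_F ≤ 1` and the augmentations `X̃ = [[X,0],[0,1]]`,
`X̃' = [[X',0],[0,1]]`, one has `‖X - X'‖_F ≤ 2 ‖X̃/‖X̃‖_F - X̃'/‖X̃'‖_F‖_F`. -/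
theorem frob_diff_le_normalized_augmented (n₁ n₂ : ℕ)
    (X X' : Matrix (Fin n₁) (Fin n₂) ℝ)
    (hX : frob X ≤ 1) (hX' : frob X' ≤ 1)
    (Xtil Xtil' : Matrix (Fin n₁ ⊕ Fin 1) (Fin n₂ ⊕ Fin 1) ℝ)
    (h1 : Xtil = Matrix.fromBlocks X 0 0 (1 : Matrix (Fin 1) (Fin 1) ℝ))
    (h2 : Xtil' = Matrix.fromBlocks X' 0 0 (1 : Matrix (Fin 1) (Fin 1) ℝ)) :
    frob (X - X') ≤ 2 * frob ((frob Xtil)⁻¹ • Xtil - (frob Xtil')⁻¹ • Xtil') := by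
  set a := frob Xtil
  set b := frob Xtil'
  have ha : a = √(frob X ^ 2 + 1) := by
    rw [← one_pow 2, ← frob_fromBlocks_zero_zero_smul_one, one_smul, ← h1]
  have hblocks : a⁻¹ • Xtil - b⁻¹ • Xtil' =
      Matrix.fromBlocks (a⁻¹ • X - b⁻¹ • X') 0 0 ((a⁻¹ - b⁻¹) • 1) := by
    rw [h1, h2, Matrix.fromBlocks_smul, Matrix.fromBlocks_smul, sub_eq_add_neg,
      Matrix.fromBlocks_neg, Matrix.fromBlocks_add]
    simp only [smul_zero, neg_zero, add_zero, ← sub_eq_add_neg, sub_smul]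
  rw [hblocks, frob_fromBlocks_zero_zero_smul_one]
  refine frob_sub_le_two_mul_sqrt ?_ ?_ hX'
  · rw [ha]; exact Real.one_le_sqrt.mpr (le_add_of_nonneg_left (sq_nonneg _))
  · rw [ha, Real.sq_sqrt (by positivity)]; linarith [pow_le_one₀ (n := 2) (frob_nonneg X) hX]
end
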